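/- arXiv:1909.07515 — 6 statements merged into one kernel-verified Lean document; each statement's English description precedes it below -/
import Mathlib

section
/- If row i is good (i.e., r_i^2 < ε σ^2 u_i^2) and u_i ≠ 0, then |u_i - p_i/u_i| ≤ ε |u_i|, where p_i = (σ^2 u_i^2 + r_i^2)/(σ^2 + r^2) is the length-squared sampling probability of row i. -/
/-- If row `i` is good (`r_i^2 < ε σ^2 u_i^2`) and `u_i ≠ 0`, then
`|u_i - p_i / u_i| ≤ ε |u_i|`, where `p_i = (σ^2 u_i^2 + r_i^2)/(σ^2 + r^2)`. -/
theorem stmt0 (n : ℕ) (ε σ : ℝ) (u r : Fin n → ℝ)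
    (hε0 : 0 < ε) (hε1 : ε < 1) (hσ : 0 < σ)
    (hu : ∑ i, u i ^ 2 = 1) (hr : ∀ i, 0 ≤ r i)
    (hR : ∑ i, r i ^ 2 ≤ ε ^ 3 * σ ^ 2)
    (i : Fin n) (hgood : r i ^ 2 < ε * σ ^ 2 * u i ^ 2) (hui : u i ≠ 0) :
    |u i - (σ ^ 2 * u i ^ 2 + r i ^ 2) / (σ ^ 2 + ∑ k, r k ^ 2) / u i|
      ≤ ε * |u i| := by
  set R := ∑ k, r k ^ 2 with hRdef
  have hR0 : 0 ≤ R := Finset.sum_nonneg fun k _ => sq_nonneg _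
  have hD : 0 < σ ^ 2 + R := by positivity
  have hu2 : 0 < u i ^ 2 := by positivity
  have key : u i - (σ ^ 2 * u i ^ 2 + r i ^ 2) / (σ ^ 2 + R) / u i
      = (R * u i ^ 2 - r i ^ 2) / ((σ ^ 2 + R) * u i) := by
    field_simp
    ring
  rw [key, abs_div, abs_mul, abs_of_pos hD, div_le_iff₀ (by positivity)]
  have he3 : ε ^ 3 ≤ ε := by nlinarith [mul_nonneg (mul_nonneg hε0.le (sub_nonneg.2 hε1.le)) (by linarith : (0:ℝ) ≤ 1 + ε)]
  have hRe : R ≤ ε * (σ ^ 2 + R) := by nlinarith [mul_nonneg hε0.le hR0, pow_pos hσ 2]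
  have habs : |R * u i ^ 2 - r i ^ 2| ≤ ε * ((σ ^ 2 + R) * u i ^ 2) := by
    rw [abs_sub_le_iff]
    constructor <;> nlinarith [sq_nonneg (r i), mul_nonneg hR0 hu2.le, mul_le_mul_of_nonneg_right hRe hu2.le]
  calc |R * u i ^ 2 - r i ^ 2| ≤ ε * ((σ ^ 2 + R) * u i ^ 2) := habs
    _ = ε * |u i| * ((σ ^ 2 + R) * |u i|) := by rw [← sq_abs (u i)]; ring
end

section
/- The total length-squared sampling probability of bad rows is at most 2 r^2 / (ε σ^2); that is, Σ_{i bad} (σ^2 u_i^2 + r_i^2)/(σ^2 + r^2) ≤ 2 r^2 / (ε σ^2). -/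
/-- The total length-squared sampling probability of bad rows is at most
`2 r^2 / (ε σ^2)`. -/
theorem stmt1 (n : ℕ) (ε σ : ℝ) (u r : Fin n → ℝ)
    (hε0 : 0 < ε) (hε1 : ε < 1) (hσ : 0 < σ)
    (hu : ∑ i, u i ^ 2 = 1) (hr : ∀ i, 0 ≤ r i) :
    ∑ i ∈ Finset.univ.filter (fun i => ε * σ ^ 2 * u i ^ 2 ≤ r i ^ 2),
        (σ ^ 2 * u i ^ 2 + r i ^ 2) / (σ ^ 2 + ∑ k, r k ^ 2)
      ≤ 2 * (∑ k, r k ^ 2) / (ε * σ ^ 2) := by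
  set R := ∑ k, r k ^ 2 with hRdef
  have hR0 : 0 ≤ R := Finset.sum_nonneg fun i _ => sq_nonneg _
  have hden : (0:ℝ) < σ ^ 2 + R := by positivity
  calc ∑ i ∈ Finset.univ.filter (fun i => ε * σ ^ 2 * u i ^ 2 ≤ r i ^ 2),
        (σ ^ 2 * u i ^ 2 + r i ^ 2) / (σ ^ 2 + R)
      ≤ ∑ i ∈ Finset.univ.filter (fun i => ε * σ ^ 2 * u i ^ 2 ≤ r i ^ 2),
        (2 * r i ^ 2 / ε) / (σ ^ 2 + R) := by
        apply Finset.sum_le_sum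
        intro i hi
        rw [Finset.mem_filter] at hi
        apply div_le_div_of_nonneg_right _ hden.le
        have h1 : σ ^ 2 * u i ^ 2 ≤ r i ^ 2 / ε := by
          rw [le_div_iff₀ hε0]; nlinarith [hi.2]
        have h2 : r i ^ 2 ≤ r i ^ 2 / ε := by
          rw [le_div_iff₀ hε0]; nlinarith [sq_nonneg (r i)]
        calc σ ^ 2 * u i ^ 2 + r i ^ 2 ≤ r i ^ 2 / ε + r i ^ 2 / ε := add_le_add h1 h2
          _ = 2 * r i ^ 2 / ε := by ring
    _ ≤ ∑ i, (2 * r i ^ 2 / ε) / (σ ^ 2 + R) := by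
        apply Finset.sum_le_sum_of_subset_of_nonneg (Finset.filter_subset _ _)
        intro i _ _
        positivity
    _ = (2 * R / ε) / (σ ^ 2 + R) := by
        rw [← Finset.sum_div, ← Finset.sum_div, ← Finset.mul_sum]
    _ ≤ (2 * R / ε) / σ ^ 2 := by
        apply div_le_div_of_nonneg_left (by positivity) (by positivity)
        linarith
    _ = 2 * R / (ε * σ ^ 2) := by
        rw [div_div]
end

section
/- ‖σ·E[z] − Σ_i u_i r^(i)‖ ≤ 2εr, where E[z] = Σ_{i∈G} p_i r^(i)/(u_i σ), G is the set of good rows, p_i = (σ^2 u_i^2 + r_i^2)/(σ^2 + r^2). -/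
/-!
Split `σ • E[z] - ∑ᵢ uᵢ • r⁽ⁱ⁾` row by row. On a good row the coefficient `σ pᵢ / (uᵢ σ) - uᵢ`
equals `(rᵢ² - uᵢ² r²) / ((σ² + r²) uᵢ)`, which is small because `rᵢ < √ε σ |uᵢ|`; a bad row
contributes `|uᵢ| rᵢ ≤ rᵢ² / (√ε σ)`. Summing, the error is at most
`r² / (√ε σ) + (r² / σ²) ∑ᵢ |uᵢ| rᵢ`, and both terms are at most `ε r`: the first because
`r ≤ ε^(3/2) σ`, the second by Cauchy–Schwarz (`∑ᵢ |uᵢ| rᵢ ≤ r`) and `r² / σ² ≤ ε³ ≤ ε`.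
-/

open Finset

theorem smul_sum_filter_sub_sum {ι R M : Type*} [Ring R] [AddCommGroup M] [Module R M]
    (s : Finset ι) (p : ι → Prop) [DecidablePred p] (σ : R) (c u : ι → R) (v : ι → M) :
    σ • ∑ i ∈ s with p i, c i • v i - ∑ i ∈ s, u i • v i
      = ∑ i ∈ s, (if p i then σ * c i - u i else -u i) • v i := by
  rw [sum_filter, smul_sum, ← sum_sub_distrib]
  refine sum_congr rfl fun i _ => ?_
  split_ifs <;> simp [smul_smul, sub_smul]

theorem norm_sum_smul_le {ι E : Type*} [SeminormedAddCommGroup E] [NormedSpace ℝ E]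
    (s : Finset ι) (a : ι → ℝ) (v : ι → E) :
    ‖∑ i ∈ s, a i • v i‖ ≤ ∑ i ∈ s, |a i| * ‖v i‖ :=
  (norm_sum_le _ _).trans_eq <| sum_congr rfl fun i _ => by rw [norm_smul, Real.norm_eq_abs]

section RowBounds

variable {ε σ u a R : ℝ}

theorem abs_mul_le_sq_div_of_bad (hε : 0 < ε) (hσ : 0 < σ) (ha : 0 ≤ a)
    (hbad : ε * σ ^ 2 * u ^ 2 ≤ a ^ 2) :
    |u| * a ≤ a ^ 2 / (√ε * σ) := by
  have hle : √ε * σ * |u| ≤ a := by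
    refine (pow_le_pow_iff_left₀ (by positivity) ha two_ne_zero).1 ?_
    rwa [mul_pow, mul_pow, Real.sq_sqrt hε.le, sq_abs]
  rw [le_div_iff₀ (by positivity)]
  nlinarith [abs_nonneg u]

theorem abs_coeff_sub_mul_le_of_good (hε0 : 0 < ε) (hε1 : ε ≤ 1) (hσ : 0 < σ) (hR : 0 ≤ R)
    (ha : 0 ≤ a) (hgood : a ^ 2 < ε * σ ^ 2 * u ^ 2) :
    |σ * ((σ ^ 2 * u ^ 2 + a ^ 2) / (σ ^ 2 + R) / (u * σ)) - u| * a
      ≤ a ^ 2 / (√ε * σ) + |u| * a * (R / σ ^ 2) := by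
  have hu : u ≠ 0 := by rintro rfl; nlinarith
  have hlt : a < √ε * σ * |u| := by
    refine (pow_lt_pow_iff_left₀ ha (by positivity) two_ne_zero).1 ?_
    rwa [mul_pow, mul_pow, Real.sq_sqrt hε0.le, sq_abs]
  have hcoeff : σ * ((σ ^ 2 * u ^ 2 + a ^ 2) / (σ ^ 2 + R) / (u * σ)) - u
      = (a ^ 2 - u ^ 2 * R) / ((σ ^ 2 + R) * u) := by
    field_simp
    ring
  have hnum : |a ^ 2 - u ^ 2 * R| ≤ a ^ 2 + u ^ 2 * R :=
    (abs_sub _ _).trans_eq (by rw [abs_of_nonneg (by positivity), abs_of_nonneg (by positivity)])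
  have hratio : a / (σ ^ 2 * |u|) ≤ 1 / (√ε * σ) := by
    rw [div_le_div_iff₀ (by positivity) (by positivity), one_mul]
    calc a * (√ε * σ) ≤ √ε * σ * |u| * (√ε * σ) := by gcongr
      _ = ε * (σ ^ 2 * |u|) := by
          linear_combination σ ^ 2 * |u| * Real.mul_self_sqrt hε0.le
      _ ≤ σ ^ 2 * |u| := mul_le_of_le_one_left (by positivity) hε1
  calc |σ * ((σ ^ 2 * u ^ 2 + a ^ 2) / (σ ^ 2 + R) / (u * σ)) - u| * a
      = |a ^ 2 - u ^ 2 * R| * a / ((σ ^ 2 + R) * |u|) := by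
        rw [hcoeff, abs_div, abs_mul, abs_of_pos (by positivity : 0 < σ ^ 2 + R)]
        ring
    _ ≤ (a ^ 2 + u ^ 2 * R) * a / (σ ^ 2 * |u|) := by
        gcongr
        exact le_add_of_nonneg_right hR
    _ = a ^ 2 * (a / (σ ^ 2 * |u|)) + |u| * a * (R / σ ^ 2) := by
        rw [← sq_abs u]
        field_simp
    _ ≤ a ^ 2 * (1 / (√ε * σ)) + |u| * a * (R / σ ^ 2) := by gcongr
    _ = a ^ 2 / (√ε * σ) + |u| * a * (R / σ ^ 2) := by rw [mul_one_div]

end RowBounds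

theorem sum_abs_mul_le_sqrt_sum_sq {ι : Type*} (s : Finset ι) (u a : ι → ℝ)
    (hu : ∑ i ∈ s, u i ^ 2 = 1) :
    ∑ i ∈ s, |u i| * a i ≤ √(∑ i ∈ s, a i ^ 2) := by
  simpa [hu] using Real.sum_mul_le_sqrt_mul_sqrt s (fun i => |u i|) a

section TotalBounds

variable {ε σ R : ℝ}

theorem div_sqrt_mul_le_mul_sqrt (hε : 0 < ε) (hσ : 0 < σ) (hR : 0 ≤ R)
    (hRle : R ≤ ε ^ 3 * σ ^ 2) :
    R / (√ε * σ) ≤ ε * √R := by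
  have hsqrtR : √R ≤ ε * √ε * σ := by
    rw [Real.sqrt_le_left (by positivity)]
    convert hRle using 1
    rw [mul_pow, mul_pow, Real.sq_sqrt hε.le]
    ring
  rw [div_le_iff₀ (by positivity)]
  calc R = √R * √R := (Real.mul_self_sqrt hR).symm
    _ ≤ √R * (ε * √ε * σ) := by gcongr
    _ = ε * √R * (√ε * σ) := by ring

theorem mul_div_sq_le_mul_sqrt (hε0 : 0 < ε) (hε1 : ε ≤ 1) (hσ : 0 < σ) (hR : 0 ≤ R)
    (hRle : R ≤ ε ^ 3 * σ ^ 2) {S : ℝ} (hS : S ≤ √R) :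
    S * (R / σ ^ 2) ≤ ε * √R := by
  have hRσ : R / σ ^ 2 ≤ ε := by
    rw [div_le_iff₀ (by positivity)]
    calc R ≤ ε ^ 3 * σ ^ 2 := hRle
      _ ≤ ε * σ ^ 2 := by gcongr; exact pow_le_of_le_one hε0.le hε1 (by norm_num)
  calc S * (R / σ ^ 2) ≤ √R * ε := mul_le_mul hS hRσ (by positivity) (Real.sqrt_nonneg R)
    _ = ε * √R := mul_comm _ _

end TotalBounds

/-- `‖σ·E[z] − ∑ u_i r^(i)‖ ≤ 2εr`, where `E[z] = ∑_{i∈G} p_i r^(i)/(u_i σ)`,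
`G` the set of good rows and `p_i` the length-squared sampling probabilities. -/
theorem stmt5 {E : Type*} [NormedAddCommGroup E] [InnerProductSpace ℝ E]
    (n : ℕ) (ε σ : ℝ) (u : Fin n → ℝ) (rv : Fin n → E)
    (hε0 : 0 < ε) (hε1 : ε < 1) (hσ : 0 < σ)
    (hu : ∑ i, u i ^ 2 = 1)
    (hR : ∑ i, ‖rv i‖ ^ 2 ≤ ε ^ 3 * σ ^ 2) :
    ‖σ • (∑ i ∈ Finset.univ.filter (fun i => ‖rv i‖ ^ 2 < ε * σ ^ 2 * u i ^ 2),
            ((σ ^ 2 * u i ^ 2 + ‖rv i‖ ^ 2) / (σ ^ 2 + ∑ k, ‖rv k‖ ^ 2) / (u i * σ)) • rv i)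
        - ∑ i, u i • rv i‖
      ≤ 2 * ε * Real.sqrt (∑ i, ‖rv i‖ ^ 2) := by
  set R := ∑ i, ‖rv i‖ ^ 2
  have hR0 : 0 ≤ R := by positivity
  rw [smul_sum_filter_sub_sum]
  refine (norm_sum_smul_le _ _ _).trans ?_
  calc _ ≤ ∑ i, (‖rv i‖ ^ 2 / (√ε * σ) + |u i| * ‖rv i‖ * (R / σ ^ 2)) := by
        gcongr with i
        split_ifs with hgood
        · exact abs_coeff_sub_mul_le_of_good hε0 hε1.le hσ hR0 (norm_nonneg _) hgood
        · rw [abs_neg]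
          exact (abs_mul_le_sq_div_of_bad hε0 hσ (norm_nonneg _) (not_lt.1 hgood)).trans
            (le_add_of_nonneg_right (by positivity))
    _ = R / (√ε * σ) + (∑ i, |u i| * ‖rv i‖) * (R / σ ^ 2) := by
        rw [sum_add_distrib, ← sum_div, ← sum_mul]
    _ ≤ ε * √R + ε * √R :=
        add_le_add (div_sqrt_mul_le_mul_sqrt hε0 hσ hR0 hR)
          (mul_div_sq_le_mul_sqrt hε0 hε1.le hσ hR0 hR
            (sum_abs_mul_le_sqrt_sum_sq _ u (‖rv ·‖) hu))
    _ = 2 * ε * √R := by ring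
end

section
/- Σ_{k∈G} p_k r_k^2/(u_k^2 σ^2) ≤ (1+ε) r^2 / σ^2, where G is the set of good rows and p_k is the length-squared sampling probability. Consequently, (σ^2/l)·Σ_{k∈G} p_k r_k^2/(u_k^2 σ^2) ≤ ε r^2 whenever l ≥ 2/ε^4. -/
/-- `∑_{k∈G} p_k r_k^2/(u_k^2 σ^2) ≤ (1+ε) r^2 / σ^2`, and consequently
`(σ^2/l)·∑_{k∈G} p_k r_k^2/(u_k^2 σ^2) ≤ ε r^2` whenever `l ≥ 2/ε^4`. -/
theorem stmt6 (n : ℕ) (ε σ : ℝ) (u r : Fin n → ℝ) (l : ℕ)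
    (hε0 : 0 < ε) (hε1 : ε < 1) (hσ : 0 < σ) (hl : 0 < l)
    (hu : ∑ i, u i ^ 2 = 1) (hr : ∀ i, 0 ≤ r i)
    (hR : ∑ i, r i ^ 2 ≤ ε ^ 3 * σ ^ 2) :
    ∑ k ∈ Finset.univ.filter (fun k => r k ^ 2 < ε * σ ^ 2 * u k ^ 2),
        (σ ^ 2 * u k ^ 2 + r k ^ 2) / (σ ^ 2 + ∑ i, r i ^ 2) * (r k ^ 2 / (u k ^ 2 * σ ^ 2))
      ≤ (1 + ε) * (∑ i, r i ^ 2) / σ ^ 2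
    ∧ ((2 / ε ^ 4 ≤ (l : ℝ)) →
        σ ^ 2 / l * ∑ k ∈ Finset.univ.filter (fun k => r k ^ 2 < ε * σ ^ 2 * u k ^ 2),
            (σ ^ 2 * u k ^ 2 + r k ^ 2) / (σ ^ 2 + ∑ i, r i ^ 2) * (r k ^ 2 / (u k ^ 2 * σ ^ 2))
          ≤ ε * ∑ i, r i ^ 2) := by
  set R := ∑ i, r i ^ 2 with hRdef
  have hR0 : 0 ≤ R := Finset.sum_nonneg fun i _ => sq_nonneg _
  have hσ2 : (0:ℝ) < σ ^ 2 := by positivity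
  have hmain :
      ∑ k ∈ Finset.univ.filter (fun k => r k ^ 2 < ε * σ ^ 2 * u k ^ 2),
        (σ ^ 2 * u k ^ 2 + r k ^ 2) / (σ ^ 2 + R) * (r k ^ 2 / (u k ^ 2 * σ ^ 2))
      ≤ (1 + ε) * R / σ ^ 2 := by
    have h1 : ∀ k ∈ Finset.univ.filter (fun k => r k ^ 2 < ε * σ ^ 2 * u k ^ 2),
        (σ ^ 2 * u k ^ 2 + r k ^ 2) / (σ ^ 2 + R) * (r k ^ 2 / (u k ^ 2 * σ ^ 2))
        ≤ (1 + ε) * r k ^ 2 / σ ^ 2 := by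
      intro k hk
      simp only [Finset.mem_filter] at hk
      have hgood := hk.2
      have hu2 : 0 < u k ^ 2 := by
        by_contra h
        push_neg at h
        have : u k ^ 2 = 0 := le_antisymm h (sq_nonneg _)
        rw [this] at hgood
        nlinarith [sq_nonneg (r k)]
      have hp : (σ ^ 2 * u k ^ 2 + r k ^ 2) / (σ ^ 2 + R)
          ≤ (σ ^ 2 * u k ^ 2 + r k ^ 2) / σ ^ 2 := by
        apply div_le_div_of_nonneg_left (by positivity) hσ2
        linarith
      have hq : (σ ^ 2 * u k ^ 2 + r k ^ 2) / σ ^ 2 * (r k ^ 2 / (u k ^ 2 * σ ^ 2))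
          ≤ (1 + ε) * r k ^ 2 / σ ^ 2 := by
        rw [div_mul_div_comm, div_le_div_iff₀ (by positivity) hσ2]
        ring_nf
        nlinarith [mul_le_mul_of_nonneg_left hgood.le
          (mul_nonneg hσ2.le (sq_nonneg (r k)))]
      calc (σ ^ 2 * u k ^ 2 + r k ^ 2) / (σ ^ 2 + R) * (r k ^ 2 / (u k ^ 2 * σ ^ 2))
          ≤ (σ ^ 2 * u k ^ 2 + r k ^ 2) / σ ^ 2 * (r k ^ 2 / (u k ^ 2 * σ ^ 2)) := by
            apply mul_le_mul_of_nonneg_right hp (by positivity)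
        _ ≤ (1 + ε) * r k ^ 2 / σ ^ 2 := hq
    calc ∑ k ∈ Finset.univ.filter (fun k => r k ^ 2 < ε * σ ^ 2 * u k ^ 2),
          (σ ^ 2 * u k ^ 2 + r k ^ 2) / (σ ^ 2 + R) * (r k ^ 2 / (u k ^ 2 * σ ^ 2))
        ≤ ∑ k ∈ Finset.univ.filter (fun k => r k ^ 2 < ε * σ ^ 2 * u k ^ 2),
          (1 + ε) * r k ^ 2 / σ ^ 2 := Finset.sum_le_sum h1
      _ ≤ ∑ k, (1 + ε) * r k ^ 2 / σ ^ 2 := by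
          apply Finset.sum_le_sum_of_subset_of_nonneg (Finset.filter_subset _ _)
          intro i _ _; positivity
      _ = (1 + ε) * R / σ ^ 2 := by
          rw [hRdef, Finset.mul_sum, Finset.sum_div]
  refine ⟨hmain, fun hl2 => ?_⟩
  have hlpos : (0:ℝ) < l := by exact_mod_cast hl
  have hS0 : 0 ≤ ∑ k ∈ Finset.univ.filter (fun k => r k ^ 2 < ε * σ ^ 2 * u k ^ 2),
      (σ ^ 2 * u k ^ 2 + r k ^ 2) / (σ ^ 2 + R) * (r k ^ 2 / (u k ^ 2 * σ ^ 2)) := by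
    apply Finset.sum_nonneg
    intro i _
    have : 0 ≤ σ ^ 2 + R := by linarith
    positivity
  calc σ ^ 2 / l * ∑ k ∈ Finset.univ.filter (fun k => r k ^ 2 < ε * σ ^ 2 * u k ^ 2),
        (σ ^ 2 * u k ^ 2 + r k ^ 2) / (σ ^ 2 + R) * (r k ^ 2 / (u k ^ 2 * σ ^ 2))
      ≤ σ ^ 2 / l * ((1 + ε) * R / σ ^ 2) := by
        apply mul_le_mul_of_nonneg_left hmain (by positivity)
    _ = (1 + ε) * R / l := by field_simp
    _ ≤ ε * R := by
        rw [div_le_iff₀ hlpos]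
        have h1 : 2 / ε ^ 4 * ((1 + ε) * ε ^ 4 / 2) ≤ (l:ℝ) * ((1 + ε) * ε ^ 4 / 2) := by
          apply mul_le_mul_of_nonneg_right hl2 (by positivity)
        have h2 : 2 / ε ^ 4 * ((1 + ε) * ε ^ 4 / 2) = 1 + ε := by field_simp
        have he3 : ε ^ 3 ≤ 1 := pow_le_one₀ hε0.le hε1.le
        have h3 : (1 + ε) * ε ^ 4 / 2 ≤ ε := by nlinarith [pow_pos hε0 3, pow_pos hε0 4]
        nlinarith [mul_le_mul_of_nonneg_left h3 (mul_nonneg hR0 hlpos.le)]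
end

section
/- Under the assumptions r^2 ≤ ε^3 σ^2, l ≥ 2/ε^4, and P(t_j = 0) ≤ 2r^2/(ε σ^2) for i.i.d. {0,1}-valued t_1,...,t_l, one has Σ_i σ^2 u_i^2 · E[(1 − (Σ_j t_j)/l)^2] ≤ 5 ε r^2. -/
/-!
With `s_j = 1 - t_j`, the indicator of `{t_j = 0}`, the quantity `1 - (∑ t_j)/l` is the empirical
mean of the `s_j`. These are pairwise independent and `[0,1]`-valued, so the variance of their sum
is at most the sum of their means; with `q = 2r^2/(εσ^2)` bounding each mean this gives
`E[(1 - (∑ t_j)/l)^2] ≤ q^2 + q/l`. As `∑ u_i^2 = 1`, the left side is `σ^2` times this, and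
`σ^2 q = 2r^2/ε`, `q ≤ 2ε^2`, `1/l ≤ ε^4/2` bound it by `(4ε + ε^3) r^2 ≤ 5εr^2`.
-/

open MeasureTheory ProbabilityTheory

section
variable {Ω : Type*} [MeasurableSpace Ω] {μ : Measure Ω}

lemma integral_sq_sum_le_of_mem_Icc [IsProbabilityMeasure μ] {ι : Type*} [Fintype ι]
    {X : ι → Ω → ℝ}
    (hX : ∀ i, AEMeasurable (X i) μ) (hX01 : ∀ i, ∀ᵐ ω ∂μ, X i ω ∈ Set.Icc 0 1)
    (hindep : Pairwise fun i j => X i ⟂ᵢ[μ] X j) :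
    ∫ ω, (∑ i, X i ω) ^ 2 ∂μ ≤ (∑ i, μ[X i]) ^ 2 + ∑ i, μ[X i] := by
  have hL2 (i : ι) : MemLp (X i) 2 μ :=
    .of_bound (hX i).aestronglyMeasurable 1 <| (hX01 i).mono fun ω h => by
      rw [Real.norm_eq_abs, abs_le]; constructor <;> linarith [h.1, h.2]
  have hvar_le (i : ι) : Var[X i; μ] ≤ μ[X i] := by
    have hm : 0 ≤ μ[X i] := integral_nonneg_of_ae <| (hX01 i).mono fun ω h => h.1
    have := variance_le_sub_mul_sub (hX01 i) (hX i)
    nlinarith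
  have hvar := IndepFun.variance_sum (s := Finset.univ) (fun i _ => hL2 i)
    fun i _ j _ hij => hindep hij
  rw [variance_eq_sub (memLp_finsetSum' _ fun i _ => hL2 i)] at hvar
  simp only [Finset.sum_apply, Pi.pow_apply] at hvar
  rw [integral_finsetSum _ fun i _ => (hL2 i).integrable one_le_two] at hvar
  have := Finset.sum_le_sum fun i (_ : i ∈ Finset.univ) => hvar_le i
  linarith

lemma integral_one_sub_eq_measureReal_eq_zero {f : Ω → ℝ} (hf : Measurable f)
    (h01 : ∀ ω, f ω = 0 ∨ f ω = 1) :
    ∫ ω, 1 - f ω ∂μ = μ.real {ω | f ω = 0} := by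
  have : (fun ω => 1 - f ω) = {ω | f ω = 0}.indicator 1 := by
    funext ω
    rcases h01 ω with h | h <;> simp [h]
  rw [this]
  exact integral_indicator_one (hf (measurableSet_singleton 0))

lemma integral_one_sub_mean_sq_le [IsProbabilityMeasure μ] {ι : Type*} [Fintype ι]
    [Nonempty ι] {t : ι → Ω → ℝ} {q : ℝ} (hmeas : ∀ j, Measurable (t j))
    (h01 : ∀ j ω, t j ω = 0 ∨ t j ω = 1) (hindep : Pairwise fun j k => t j ⟂ᵢ[μ] t k)
    (hq : ∀ j, μ.real {ω | t j ω = 0} ≤ q) :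
    ∫ ω, (1 - (∑ j, t j ω) / Fintype.card ι) ^ 2 ∂μ ≤ q ^ 2 + q / Fintype.card ι := by
  set N : ℝ := (Fintype.card ι : ℝ)
  have hN : 0 < N := Nat.cast_pos.mpr Fintype.card_pos
  set s : ι → Ω → ℝ := fun j ω => 1 - t j ω
  have hs_mean (j : ι) : μ[s j] = μ.real {ω | t j ω = 0} :=
    integral_one_sub_eq_measureReal_eq_zero (hmeas j) (h01 j)
  have hsum_nonneg : 0 ≤ ∑ j, μ[s j] :=
    Finset.sum_nonneg fun j _ => (hs_mean j).symm ▸ measureReal_nonneg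
  have hsum_le : ∑ j, μ[s j] ≤ N * q := by
    simpa [hs_mean, N] using Finset.sum_le_sum fun j (_ : j ∈ Finset.univ) => hq j
  have hsum_sq := integral_sq_sum_le_of_mem_Icc (X := s)
    (fun j => ((hmeas j).const_sub 1).aemeasurable)
    (fun j => .of_forall fun ω => by rcases h01 j ω with h | h <;> simp [s, h])
    fun j k hjk => (hindep hjk).comp (measurable_const_sub 1) (measurable_const_sub 1)
  have hrw (ω : Ω) : (1 - (∑ j, t j ω) / N) ^ 2 = (∑ j, s j ω) ^ 2 / N ^ 2 := by
    simp only [s, Finset.sum_sub_distrib, Finset.sum_const, Finset.card_univ, nsmul_eq_mul,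
      mul_one]
    field_simp
    rfl
  simp_rw [hrw, integral_div]
  calc (∫ ω, (∑ j, s j ω) ^ 2 ∂μ) / N ^ 2 ≤ ((∑ j, μ[s j]) ^ 2 + ∑ j, μ[s j]) / N ^ 2 := by
        gcongr
    _ ≤ ((N * q) ^ 2 + N * q) / N ^ 2 := by gcongr
    _ = q ^ 2 + q / N := by field_simp

end

lemma sq_mul_sq_add_div_le_five_mul {ε σ r l : ℝ} (hε0 : 0 < ε) (hε1 : ε < 1) (hσ : 0 < σ)
    (hR : r ^ 2 ≤ ε ^ 3 * σ ^ 2) (hl : 2 / ε ^ 4 ≤ l) :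
    σ ^ 2 * ((2 * r ^ 2 / (ε * σ ^ 2)) ^ 2 + 2 * r ^ 2 / (ε * σ ^ 2) / l) ≤ 5 * ε * r ^ 2 := by
  set q := 2 * r ^ 2 / (ε * σ ^ 2)
  have hl0 : 0 < l := (by positivity : (0 : ℝ) < 2 / ε ^ 4).trans_le hl
  have hσq : σ ^ 2 * q = 2 * r ^ 2 / ε := by simp only [q]; field_simp
  have hq : q ≤ 2 * ε ^ 2 := by
    rw [div_le_iff₀ (by positivity)]; nlinarith
  have hinv : 1 / l ≤ ε ^ 4 / 2 := by
    rw [div_le_iff₀ (by positivity)] at hl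
    rw [div_le_div_iff₀ hl0 two_pos]; linarith
  calc σ ^ 2 * (q ^ 2 + q / l) = σ ^ 2 * q * (q + 1 / l) := by ring
    _ ≤ 2 * r ^ 2 / ε * (2 * ε ^ 2 + ε ^ 4 / 2) := by rw [hσq]; gcongr
    _ = (4 * ε + ε ^ 3) * r ^ 2 := by field_simp; ring
    _ ≤ 5 * ε * r ^ 2 := by gcongr; nlinarith [pow_le_one₀ hε0.le hε1.le (n := 2)]

theorem stmt8_general {Ω : Type*} [MeasurableSpace Ω] (μ : Measure Ω) [IsProbabilityMeasure μ]
    (n l : ℕ) (ε σ r : ℝ) (u : Fin n → ℝ)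
    (hε0 : 0 < ε) (hε1 : ε < 1) (hσ : 0 < σ)
    (hu : ∑ i, u i ^ 2 = 1)
    (hR : r ^ 2 ≤ ε ^ 3 * σ ^ 2)
    (hl2 : 2 / ε ^ 4 ≤ (l : ℝ))
    (t : Fin l → Ω → ℝ)
    (h01 : ∀ j ω, t j ω = 0 ∨ t j ω = 1)
    (hmeas : ∀ j, Measurable (t j))
    (hindep : iIndepFun t μ)
    (hq : ∀ j, (μ {ω | t j ω = 0}).toReal ≤ 2 * r ^ 2 / (ε * σ ^ 2)) :
    ∑ i, σ ^ 2 * u i ^ 2 * ∫ ω, (1 - (∑ j, t j ω) / l) ^ 2 ∂μ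
      ≤ 5 * ε * r ^ 2 := by
  have hpos : (0 : ℝ) < l := (by positivity : (0 : ℝ) < 2 / ε ^ 4).trans_le hl2
  have : Nonempty (Fin l) := ⟨⟨0, Nat.cast_pos.mp hpos⟩⟩
  have hmean_sq := integral_one_sub_mean_sq_le hmeas h01
    (fun j k hjk => hindep.indepFun hjk) hq
  rw [Fintype.card_fin] at hmean_sq
  rw [← Finset.sum_mul, ← Finset.mul_sum, hu, mul_one]
  calc σ ^ 2 * ∫ ω, (1 - (∑ j, t j ω) / l) ^ 2 ∂μ
      ≤ σ ^ 2 * ((2 * r ^ 2 / (ε * σ ^ 2)) ^ 2 + 2 * r ^ 2 / (ε * σ ^ 2) / l) := by gcongr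
    _ ≤ 5 * ε * r ^ 2 := sq_mul_sq_add_div_le_five_mul hε0 hε1 hσ hR hl2

/-- Under `r^2 ≤ ε^3 σ^2`, `l ≥ 2/ε^4` and `P(t_j = 0) ≤ 2r^2/(ε σ^2)` for
i.i.d. `{0,1}`-valued `t_j`, one has
`∑ i, σ^2 u_i^2 · E[(1 − (∑_j t_j)/l)^2] ≤ 5 ε r^2`. -/
theorem stmt8 {Ω : Type*} [MeasurableSpace Ω] (μ : Measure Ω) [IsProbabilityMeasure μ]
    (n l : ℕ) (ε σ r : ℝ) (u : Fin n → ℝ)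
    (hε0 : 0 < ε) (hε1 : ε < 1) (hσ : 0 < σ) (hr : 0 ≤ r)
    (hu : ∑ i, u i ^ 2 = 1)
    (hR : r ^ 2 ≤ ε ^ 3 * σ ^ 2)
    (hl : 0 < l) (hl2 : 2 / ε ^ 4 ≤ (l : ℝ))
    (t : Fin l → Ω → ℝ)
    (h01 : ∀ j ω, t j ω = 0 ∨ t j ω = 1)
    (hmeas : ∀ j, Measurable (t j))
    (hindep : iIndepFun t μ)
    (hid : ∀ j k, IdentDistrib (t j) (t k) μ μ)
    (hq : ∀ j, (μ {ω | t j ω = 0}).toReal ≤ 2 * r ^ 2 / (ε * σ ^ 2)) :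
    ∑ i, σ ^ 2 * u i ^ 2 * ∫ ω, (1 - (∑ j, t j ω) / l) ^ 2 ∂μ
      ≤ 5 * ε * r ^ 2 :=
  stmt8_general μ n l ε σ r u hε0 hε1 hσ hu hR hl2 t h01 hmeas hindep hq
end

section
/- A single row of A sampled with length-squared probabilities gives a 2-factor approximation to the best-fit line in expectation: if s is a random row of A with P(s = A^(i)) = ‖A^(i)‖^2/‖A‖_F^2, and π_s(A) denotes the projection of each row of A onto the line spanned by s, then E[‖A − π_s(A)‖_F^2] ≤ 2·‖A − π_1(A)‖_F^2. -/
/-!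
Write `F = ∑ ‖aᵢ‖²`, `S = ∑ ⟪aᵢ, v⟫²` and `T = ∑ᵢₖ ⟪aᵢ, aₖ⟫²` (the squared Frobenius norm of the
Gram matrix). Pythagoras turns the expected error into `F - T / F` and the error of the line
through `v` into `F - S`. With `w = ∑ ⟪aᵢ, v⟫ • aᵢ` one has `S = ⟪w, v⟫ ≤ ‖w‖`, and Cauchy–Schwarz
on the double sum `‖w‖² = ∑ᵢₖ ⟪aᵢ, v⟫ ⟪aₖ, v⟫ ⟪aᵢ, aₖ⟫` gives `‖w‖² ≤ S √T`; hence `S² ≤ T`, and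
`F - T / F ≤ F - S² / F ≤ 2 (F - S)` is AM–GM.
-/

open Finset
open scoped RealInnerProductSpace

variable {E ι : Type*} [NormedAddCommGroup E] [InnerProductSpace ℝ E] [Fintype ι]

lemma norm_sub_inner_div_smul_sq (x y : E) :
    ‖x - (⟪x, y⟫ / ‖y‖ ^ 2) • y‖ ^ 2 = ‖x‖ ^ 2 - ⟪x, y⟫ ^ 2 / ‖y‖ ^ 2 := by
  rcases eq_or_ne y 0 with rfl | hy
  · simp
  have hy : ‖y‖ ≠ 0 := norm_ne_zero_iff.mpr hy
  rw [norm_sub_sq_real, real_inner_smul_right, norm_smul, mul_pow, Real.norm_eq_abs, sq_abs]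
  field_simp
  ring

lemma sum_norm_sub_inner_div_smul_sq (a : ι → E) (y : E) :
    ∑ i, ‖a i - (⟪a i, y⟫ / ‖y‖ ^ 2) • y‖ ^ 2 =
      ∑ i, ‖a i‖ ^ 2 - (∑ i, ⟪a i, y⟫ ^ 2) / ‖y‖ ^ 2 := by
  simp only [norm_sub_inner_div_smul_sq, sum_sub_distrib, sum_div]

lemma sum_norm_sq_div_mul_sum_norm_sub_inner_div_smul_sq (a : ι → E) :
    ∑ k, (‖a k‖ ^ 2 / ∑ j, ‖a j‖ ^ 2) * ∑ i, ‖a i - (⟪a i, a k⟫ / ‖a k‖ ^ 2) • a k‖ ^ 2 =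
      ∑ j, ‖a j‖ ^ 2 - (∑ k, ∑ i, ⟪a i, a k⟫ ^ 2) / ∑ j, ‖a j‖ ^ 2 := by
  set F := ∑ j, ‖a j‖ ^ 2 with hF
  have hterm : ∀ k, ‖a k‖ ^ 2 / F * ∑ i, ‖a i - (⟪a i, a k⟫ / ‖a k‖ ^ 2) • a k‖ ^ 2 =
      ‖a k‖ ^ 2 - (∑ i, ⟪a i, a k⟫ ^ 2) / F := by
    intro k
    rw [sum_norm_sub_inner_div_smul_sq, ← hF]
    rcases eq_or_ne (a k) 0 with hk | hk
    · simp [hk]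
    have hk : 0 < ‖a k‖ ^ 2 := by positivity
    have hF : 0 < F := hk.trans_le (single_le_sum (fun j _ ↦ sq_nonneg ‖a j‖) (mem_univ k))
    field_simp
  simp only [hterm, sum_sub_distrib, ← sum_div, ← hF]

lemma norm_sum_smul_sq (x : ι → ℝ) (a : ι → E) :
    ‖∑ i, x i • a i‖ ^ 2 = ∑ k, ∑ i, x i * x k * ⟪a i, a k⟫ := by
  simp only [← real_inner_self_eq_norm_sq, sum_inner, inner_sum, real_inner_smul_left,
    real_inner_smul_right]
  refine sum_congr rfl fun k _ ↦ sum_congr rfl fun i _ ↦ ?_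
  ring

lemma sq_sum_inner_sq_le_sum_sum_inner_sq (a : ι → E) {v : E} (hv : ‖v‖ ≤ 1) :
    (∑ i, ⟪a i, v⟫ ^ 2) ^ 2 ≤ ∑ k, ∑ i, ⟪a i, a k⟫ ^ 2 := by
  set S := ∑ i, ⟪a i, v⟫ ^ 2
  set T := ∑ k, ∑ i, ⟪a i, a k⟫ ^ 2
  set w := ∑ i, ⟪a i, v⟫ • a i
  have hS : 0 ≤ S := sum_nonneg fun i _ ↦ sq_nonneg _
  have hT : 0 ≤ T := sum_nonneg fun k _ ↦ sum_nonneg fun i _ ↦ sq_nonneg _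
  have hSw : S ≤ ‖w‖ := calc
    S = ⟪w, v⟫ := by simp only [S, w, sum_inner, real_inner_smul_left, sq]
    _ ≤ ‖w‖ * ‖v‖ := real_inner_le_norm w v
    _ ≤ ‖w‖ := mul_le_of_le_one_right (norm_nonneg w) hv
  have hw : (‖w‖ ^ 2) ^ 2 ≤ S ^ 2 * T := calc
    (‖w‖ ^ 2) ^ 2 = (∑ p : ι × ι, (⟪a p.1, v⟫ * ⟪a p.2, v⟫) * ⟪a p.1, a p.2⟫) ^ 2 := by
      rw [norm_sum_smul_sq, Fintype.sum_prod_type_right]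
    _ ≤ (∑ p : ι × ι, (⟪a p.1, v⟫ * ⟪a p.2, v⟫) ^ 2) * ∑ p : ι × ι, ⟪a p.1, a p.2⟫ ^ 2 :=
      sum_mul_sq_le_sq_mul_sq _ _ _
    _ = S ^ 2 * T := by
      simp only [Fintype.sum_prod_type_right, mul_pow, ← sum_mul, ← mul_sum, S, T, sq S]
  have hS4 : S ^ 2 * S ^ 2 ≤ S ^ 2 * T := calc
    S ^ 2 * S ^ 2 = (S ^ 2) ^ 2 := (sq _).symm
    _ ≤ (‖w‖ ^ 2) ^ 2 := pow_le_pow_left₀ (sq_nonneg S) (pow_le_pow_left₀ hS hSw 2) 2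
    _ ≤ S ^ 2 * T := hw
  rcases (sq_nonneg S).eq_or_lt with hS0 | hSpos
  · exact hS0 ▸ hT
  · exact le_of_mul_le_mul_left hS4 hSpos

lemma sub_div_le_two_mul_sub {F S T : ℝ} (hF : 0 ≤ F) (hSF : S ≤ F) (hST : S ^ 2 ≤ T) :
    F - T / F ≤ 2 * (F - S) := by
  rcases hF.eq_or_lt with rfl | hF
  · simp only [div_zero]
    linarith
  have : 2 * S - F ≤ T / F := by
    rw [le_div_iff₀ hF]
    nlinarith [sq_nonneg (S - F)]
  linarith

theorem stmt12_general (n d : ℕ) (a : Fin n → EuclideanSpace ℝ (Fin d)) :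
    ∀ v : EuclideanSpace ℝ (Fin d), ‖v‖ = 1 →
      ∑ k, (‖a k‖ ^ 2 / ∑ j, ‖a j‖ ^ 2) *
          (∑ i, ‖a i - ((inner ℝ (a i) (a k) : ℝ) / ‖a k‖ ^ 2) • a k‖ ^ 2)
        ≤ 2 * ∑ i, ‖a i - (inner ℝ (a i) v : ℝ) • v‖ ^ 2 := by
  intro v hv
  have hline : ∑ i, ‖a i - ⟪a i, v⟫ • v‖ ^ 2 = ∑ i, ‖a i‖ ^ 2 - ∑ i, ⟪a i, v⟫ ^ 2 := by
    simpa [hv] using sum_norm_sub_inner_div_smul_sq a v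
  have hSF : ∑ i, ⟪a i, v⟫ ^ 2 ≤ ∑ i, ‖a i‖ ^ 2 :=
    sub_nonneg.mp (hline ▸ sum_nonneg fun i _ ↦ sq_nonneg _)
  rw [sum_norm_sq_div_mul_sum_norm_sub_inner_div_smul_sq, hline]
  exact sub_div_le_two_mul_sub (sum_nonneg fun i _ ↦ sq_nonneg _) hSF
    (sq_sum_inner_sq_le_sum_sum_inner_sq a hv.le)

/-- A single length-squared sampled row gives a 2-factor approximation in expectation
to the best-fit line: for every unit vector `v`,
`∑_k p_k ‖A − π_{A^(k)}(A)‖_F^2 ≤ 2 ∑_i ‖A^(i) − ⟨A^(i),v⟩v‖^2`. -/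
theorem stmt12 (n d : ℕ) (a : Fin n → EuclideanSpace ℝ (Fin d))
    (ha : ∀ i, a i ≠ 0) :
    ∀ v : EuclideanSpace ℝ (Fin d), ‖v‖ = 1 →
      ∑ k, (‖a k‖ ^ 2 / ∑ j, ‖a j‖ ^ 2) *
          (∑ i, ‖a i - ((inner ℝ (a i) (a k) : ℝ) / ‖a k‖ ^ 2) • a k‖ ^ 2)
        ≤ 2 * ∑ i, ‖a i - (inner ℝ (a i) v : ℝ) • v‖ ^ 2 :=
  stmt12_general n d a
end
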